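/- arXiv:2005.12034 — 2 statements merged into one kernel-verified Lean document; each statement's English description precedes it below -/
import Mathlib

section
/- Let s be a positive integer, let 1 = σ_1 ≥ σ_2 ≥ … ≥ σ_s > 0 be real numbers, and let f_1, …, f_s : (0,∞) → [0,∞) be bounded functions. Then for any ε > 0 and t_0 > 0, there exists t ≥ t_0 such that Σ_{i=1}^s f_i(t) ≤ ε + Σ_{i=1}^s f_i(σ_i t). -/
/-- One-dimensional telescoping estimate: the sum over a geometric chain of
`f(x) - f(σ x)` telescopes and is bounded by the bound `B` of `f`. -/
lemma oneD (φ : ℝ → ℝ) (B : ℝ) (hφ0 : ∀ x > (0:ℝ), 0 ≤ φ x)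
    (hφB : ∀ x > (0:ℝ), φ x ≤ B) (σ c : ℝ) (hσ : 0 < σ) (hc : 0 < c) (M : ℕ) :
    ∑ k ∈ Finset.range M, (φ (σ⁻¹ ^ k * c) - φ (σ * (σ⁻¹ ^ k * c))) ≤ B := by
  have hB : 0 ≤ B := le_trans (hφ0 c hc) (hφB c hc)
  have hpos : ∀ k : ℕ, 0 < σ⁻¹ ^ k * c := fun k =>
    mul_pos (pow_pos (inv_pos.mpr hσ) k) hc
  have hkey : ∀ k : ℕ, σ * (σ⁻¹ ^ (k + 1) * c) = σ⁻¹ ^ k * c := by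
    intro k
    rw [pow_succ', ← mul_assoc, ← mul_assoc, mul_inv_cancel₀ hσ.ne', one_mul]
  cases M with
  | zero => simpa using hB
  | succ n =>
    rw [Finset.sum_sub_distrib, Finset.sum_range_succ, Finset.sum_range_succ']
    have h3 : ∑ k ∈ Finset.range n, φ (σ * (σ⁻¹ ^ (k + 1) * c))
        = ∑ k ∈ Finset.range n, φ (σ⁻¹ ^ k * c) :=
      Finset.sum_congr rfl fun k _ => by rw [hkey]
    rw [h3]
    have h1 : φ (σ⁻¹ ^ n * c) ≤ B := hφB _ (hpos n)
    have h2 : 0 ≤ φ (σ * (σ⁻¹ ^ 0 * c)) := hφ0 _ (mul_pos hσ (hpos 0))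
    linarith

/-- Let `1 = σ_1 ≥ σ_2 ≥ … ≥ σ_s > 0` and let
`f_1, …, f_s : (0,∞) → [0,∞)` be bounded functions. Then for any `ε > 0` and `t₀ > 0` there
exists `t ≥ t₀` such that `Σ_i f_i(t) ≤ ε + Σ_i f_i(σ_i t)`. -/
theorem stmt11 (s : ℕ) (hs : 0 < s) (σ : Fin s → ℝ)
    (hσ1 : σ ⟨0, hs⟩ = 1) (hσanti : Antitone σ) (hσpos : ∀ i, 0 < σ i)
    (f : Fin s → ℝ → ℝ) (hf0 : ∀ i, ∀ x > (0:ℝ), 0 ≤ f i x)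
    (hfbdd : ∀ i, ∃ B : ℝ, ∀ x > (0:ℝ), f i x ≤ B)
    (ε t₀ : ℝ) (hε : 0 < ε) (ht₀ : 0 < t₀) :
    ∃ t ≥ t₀, ∑ i, f i t ≤ ε + ∑ i, f i (σ i * t) := by
  by_contra hcon
  push_neg at hcon
  choose B hB using hfbdd
  set C := ∑ i, B i with hC
  obtain ⟨M, hM⟩ := exists_nat_gt (C / ε)
  set N := M + 1 with hN
  have hNC : C < (N : ℝ) * ε := by
    have : C / ε < (N : ℝ) := lt_of_lt_of_le hM (by exact_mod_cast Nat.le_succ M)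
    calc C = (C / ε) * ε := by field_simp
    _ < (N : ℝ) * ε := by exact mul_lt_mul_of_pos_right this hε
  -- each σ j is in (0, 1]
  have hσle1 : ∀ j, σ j ≤ 1 := by
    intro j
    rw [← hσ1]
    exact hσanti (Fin.mk_le_of_le_val (Nat.zero_le _))
  set w : Fin s → ℝ := fun j => (σ j)⁻¹ with hw
  have hw1 : ∀ j, 1 ≤ w j := fun j => (one_le_inv₀ (hσpos j)).2 (hσle1 j)
  -- the grid
  set g : (Fin s → Fin N) → ℝ := fun a => (∏ j, w j ^ (a j : ℕ)) * t₀ with hg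
  have hg_ge : ∀ a, t₀ ≤ g a := by
    intro a
    have : (1:ℝ) ≤ ∏ j, w j ^ (a j : ℕ) := by
      have := Finset.prod_le_prod (s := Finset.univ) (f := fun _ : Fin s => (1:ℝ))
        (g := fun j => w j ^ (a j : ℕ)) (fun j _ => zero_le_one)
        (fun j _ => one_le_pow₀ (hw1 j))
      simpa using this
    calc t₀ = 1 * t₀ := (one_mul t₀).symm
    _ ≤ g a := mul_le_mul_of_nonneg_right this ht₀.le
  -- pointwise lower bound on the grid
  have hDa : ∀ a, ε < ∑ i, (f i (g a) - f i (σ i * g a)) := by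
    intro a
    have := hcon (g a) (hg_ge a)
    rw [Finset.sum_sub_distrib]
    linarith
  -- per-index upper bound
  have hper : ∀ i : Fin s,
      ∑ a : Fin s → Fin N, (f i (g a) - f i (σ i * g a))
        ≤ (N : ℝ) ^ (s - 1) * B i := by
    intro i
    set e := Equiv.funSplitAt i (Fin N) with he
    have hsum : ∑ a : Fin s → Fin N, (f i (g a) - f i (σ i * g a))
        = ∑ p : Fin N × ({ j // j ≠ i } → Fin N),
            (f i (g (e.symm p)) - f i (σ i * g (e.symm p))) :=
      (Equiv.sum_comp e.symm _).symm
    -- value of g on split points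
    have hgv : ∀ (k : Fin N) (b : { j // j ≠ i } → Fin N),
        g (e.symm (k, b)) = (σ i)⁻¹ ^ (k : ℕ)
          * ((∏ j : { j // j ≠ i }, w j ^ ((b j : ℕ))) * t₀) := by
      intro k b
      have hai : (e.symm (k, b)) i = k := by simp [he, Equiv.funSplitAt]
      have haj : ∀ (j : Fin s) (h : j ≠ i), (e.symm (k, b)) j = b ⟨j, h⟩ := by
        intro j h; simp [he, Equiv.funSplitAt, dif_neg h]
      have hprod : ∏ j, w j ^ (((e.symm (k, b)) j : Fin N) : ℕ)
          = w i ^ (k : ℕ) * ∏ j : { j // j ≠ i }, w j ^ ((b j : ℕ)) := by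
        rw [Fintype.prod_eq_mul_prod_compl i]
        congr 1
        · rw [hai]
        · rw [Finset.prod_subtype ({i}ᶜ : Finset (Fin s)) (p := fun j => j ≠ i)
            (fun x => by simp) (fun j => w j ^ (((e.symm (k, b)) j : Fin N) : ℕ))]
          exact Finset.prod_congr rfl fun j _ => by rw [haj j.1 j.2]
      simp only [hg]
      rw [hprod, mul_assoc]
    have hcard : (Fintype.card ({ j // j ≠ i } → Fin N) : ℝ) = (N : ℝ) ^ (s - 1) := by
      rw [Fintype.card_fun, Fintype.card_subtype_compl, Fintype.card_subtype_eq,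
        Fintype.card_fin, Fintype.card_fin]
      push_cast
      rfl
    rw [hsum, Fintype.sum_prod_type, Finset.sum_comm]
    have hinner : ∀ b : { j // j ≠ i } → Fin N,
        ∑ k : Fin N, (f i (g (e.symm (k, b))) - f i (σ i * g (e.symm (k, b)))) ≤ B i := by
      intro b
      have hc : (0:ℝ) < (∏ j : { j // j ≠ i }, w j ^ ((b j : ℕ))) * t₀ := by
        apply mul_pos _ ht₀
        exact Finset.prod_pos fun j _ => pow_pos (lt_of_lt_of_le one_pos (hw1 j)) _
      have := oneD (f i) (B i) (hf0 i) (hB i) (σ i)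
        ((∏ j : { j // j ≠ i }, w j ^ ((b j : ℕ))) * t₀) (hσpos i) hc N
      rw [← Fin.sum_univ_eq_sum_range] at this
      refine le_trans (le_of_eq ?_) this
      exact Finset.sum_congr rfl fun k _ => by rw [hgv k b]
    calc ∑ b : { j // j ≠ i } → Fin N, ∑ k : Fin N,
          (f i (g (e.symm (k, b))) - f i (σ i * g (e.symm (k, b))))
        ≤ ∑ _b : { j // j ≠ i } → Fin N, B i := Finset.sum_le_sum fun b _ => hinner b
      _ = (N : ℝ) ^ (s - 1) * B i := by
          rw [Finset.sum_const, nsmul_eq_mul, ← hcard]; norm_num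
  -- combine
  have hlower : (N : ℝ) ^ s * ε < ∑ a : Fin s → Fin N, ∑ i, (f i (g a) - f i (σ i * g a)) := by
    have hne : Nonempty (Fin s → Fin N) := ⟨fun _ => ⟨0, Nat.succ_pos M⟩⟩
    have := Finset.sum_lt_sum_of_nonempty (s := (Finset.univ : Finset (Fin s → Fin N)))
      Finset.univ_nonempty
      (f := fun _ => ε) (g := fun a => ∑ i, (f i (g a) - f i (σ i * g a)))
      (fun a _ => hDa a)
    rw [Finset.sum_const, nsmul_eq_mul] at this
    have hcard : (Fintype.card (Fin s → Fin N) : ℝ) = (N : ℝ) ^ s := by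
      rw [Fintype.card_fun]; simp
    rw [Finset.card_univ] at this
    rw [← hcard]
    exact_mod_cast this
  have hupper : ∑ a : Fin s → Fin N, ∑ i, (f i (g a) - f i (σ i * g a))
      ≤ (N : ℝ) ^ (s - 1) * C := by
    rw [Finset.sum_comm, hC, Finset.mul_sum]
    exact Finset.sum_le_sum fun i _ => hper i
  have hNs : (N : ℝ) ^ s = (N : ℝ) ^ (s - 1) * N := by
    rw [← pow_succ]
    congr 1
    omega
  have hpow : (0:ℝ) < (N : ℝ) ^ (s - 1) := by positivity
  nlinarith [mul_lt_mul_of_pos_left hNC hpow]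
end

section
/- Let s ≥ 2 be an integer, m_i, n_i positive integers for 1 ≤ i ≤ s, a = (a_1,…,a_s) ∈ (0,∞)^s, and Θ = (θ_1,…,θ_s) ∈ M. Then Θ is jointly a-singular if and only if limsup_{t→∞} min_{1≤i≤s} h_{θ_i,1}(a_i t) = −∞. -/
noncomputable section

/-- `QSet m n θ ε` is the set `𝒬_ε(θ)` of real numbers `Q ≥ 1` for which there exists
`(p, q) ∈ ℤ^m × ℤ^n` with `‖θq − p‖^m < ε Q⁻¹` and `0 < ‖q‖^n ≤ Q` (sup norm). -/
def QSet (m n : ℕ) (θ : Fin m → Fin n → ℝ) (ε : ℝ) : Set ℝ :=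
  {Q : ℝ | 1 ≤ Q ∧ ∃ (p : Fin m → ℤ) (q : Fin n → ℤ),
    ‖(fun k => (∑ j, θ k j * (q j : ℝ)) - (p k : ℝ) : Fin m → ℝ)‖ ^ m < ε * Q⁻¹ ∧
    0 < ‖(fun j => ((q j : ℝ)) : Fin n → ℝ)‖ ^ n ∧
    ‖(fun j => ((q j : ℝ)) : Fin n → ℝ)‖ ^ n ≤ Q}

/-- `𝒬_{a,ε}(Θ) = ⋃_{i=1}^s {Q^{1/a_i} : Q ∈ 𝒬_ε(θ_i)}`. -/
def QSetW {s : ℕ} (m n : Fin s → ℕ) (a : Fin s → ℝ)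
    (θ : ∀ i, Fin (m i) → Fin (n i) → ℝ) (ε : ℝ) : Set ℝ :=
  ⋃ i, (fun Q : ℝ => Q ^ (1 / a i)) '' QSet (m i) (n i) (θ i) ε

/-- `Θ` is jointly `a`-singular: `𝒬_{a,ε}(Θ)` is a neighborhood of `+∞` for every `ε > 0`. -/
def JointlySingular {s : ℕ} (m n : Fin s → ℕ) (a : Fin s → ℝ)
    (θ : ∀ i, Fin (m i) → Fin (n i) → ℝ) : Prop :=
  ∀ ε > 0, ∃ C : ℝ, Set.Ioi C ⊆ QSetW m n a θ ε

/-- The diagonal matrix `g_t^{(m,n)} = diag(e^{t/m} I_m, e^{-t/n} I_n)`. -/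
def gMat (m n : ℕ) (t : ℝ) : Matrix (Fin (m + n)) (Fin (m + n)) ℝ :=
  Matrix.of fun k l =>
    if (k : ℕ) = (l : ℕ) then
      (if (k : ℕ) < m then Real.exp (t / (m : ℝ)) else Real.exp (-t / (n : ℝ)))
    else 0

/-- The unipotent matrix `u_θ = ((I_m, θ), (0, I_n))`. -/
def uMat (m n : ℕ) (θ : Fin m → Fin n → ℝ) : Matrix (Fin (m + n)) (Fin (m + n)) ℝ :=
  Matrix.of fun k l =>
    if hk : (k : ℕ) < m then
      (if hl : (l : ℕ) < m then (if (k : ℕ) = (l : ℕ) then 1 else 0)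
       else θ ⟨(k : ℕ), hk⟩ ⟨(l : ℕ) - m, by have := l.isLt; omega⟩)
    else (if (k : ℕ) = (l : ℕ) then 1 else 0)

/-- `λ₁(A ℤ^d)`: the first successive minimum (w.r.t. the sup norm) of the lattice `A ℤ^d`. -/
def lambdaOne (d : ℕ) (A : Matrix (Fin d) (Fin d) ℝ) : ℝ :=
  sInf {r : ℝ | ∃ v : Fin d → ℤ, v ≠ 0 ∧ r = ‖A.mulVec (fun j => ((v j : ℝ)))‖}

/-- `h_{θ,1}(t) = log λ₁(g_t^{(m,n)} u_θ ℤ^{m+n})`. -/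
def hOne (m n : ℕ) (θ : Fin m → Fin n → ℝ) (t : ℝ) : ℝ :=
  Real.log (lambdaOne (m + n) (gMat m n t * uMat m n θ))

/-!
Dani correspondence: the lattice vector `g_t u_θ (-p, q)` has sup norm
`max (e^{t/m} ‖θq - p‖, e^{-t/n} ‖q‖)`, so `λ₁(g_t u_θ ℤ^{m+n})` is small exactly when some
`(p, q)` with `q ≠ 0` has `‖θq - p‖^m ≲ e^{-t}` and `‖q‖^n ≲ e^t`, i.e. when `e^t ∈ 𝒬_ε(θ)`
up to a bounded change of `t` and of `ε`. Writing `Q = e^t`, the condition `Q ∈ 𝒬_{a,ε}(Θ)`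
asks for `e^{a_i t} ∈ 𝒬_ε(θ_i)` for some `i`, so both sides of the equivalence say that for
every threshold, for all large `t` some `i` meets it at time `a_i t`.
-/

open Real Filter Matrix

namespace DaniCorrespondence

lemma one_le_norm_intCast {k : ℕ} {v : Fin k → ℤ} (hv : v ≠ 0) :
    1 ≤ ‖fun j => (v j : ℝ)‖ := by
  obtain ⟨j, hj⟩ := Function.ne_iff.1 hv
  calc (1 : ℝ) ≤ |(v j : ℝ)| := by exact_mod_cast Int.one_le_abs hj
    _ ≤ ‖fun j => (v j : ℝ)‖ := norm_le_pi_norm (fun j => (v j : ℝ)) j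

lemma exp_div_mul_pow {k : ℕ} (hk : k ≠ 0) (t x : ℝ) :
    (exp (t / k) * x) ^ k = exp t * x ^ k := by
  rw [mul_pow, ← exp_nat_mul, mul_div_cancel₀ _ (by exact_mod_cast hk)]

lemma limsup_coe_eq_bot_iff {α : Type*} {l : Filter α} {f : α → ℝ} :
    limsup (fun x => (f x : EReal)) l = ⊥ ↔ ∀ M : ℝ, ∀ᶠ x in l, f x < M := by
  rw [← le_bot_iff, limsup_le_iff]
  refine ⟨fun h M => by simpa using h M (EReal.bot_lt_coe M), fun h y hy => ?_⟩
  induction y using EReal.rec with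
  | bot => exact absurd hy (lt_irrefl _)
  | coe M => simpa using h M
  | top => exact Eventually.of_forall fun x => EReal.coe_lt_top _

section lambdaOne

variable {d : ℕ} (A : Matrix (Fin d) (Fin d) ℝ)

lemma lambdaOne_le_norm {v : Fin d → ℤ} (hv : v ≠ 0) :
    lambdaOne d A ≤ ‖A *ᵥ fun j => (v j : ℝ)‖ :=
  csInf_le ⟨0, by rintro r ⟨v, -, rfl⟩; exact norm_nonneg _⟩ ⟨v, hv, rfl⟩

variable {A}

lemma lambdaOne_set_nonempty (hd : 0 < d) :
    {r : ℝ | ∃ v : Fin d → ℤ, v ≠ 0 ∧ r = ‖A *ᵥ fun j => (v j : ℝ)‖}.Nonempty :=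
  ⟨_, fun _ => 1, fun h => by simpa using congrFun h ⟨0, hd⟩, rfl⟩

lemma le_lambdaOne {c : ℝ} (hd : 0 < d)
    (h : ∀ v : Fin d → ℤ, v ≠ 0 → c ≤ ‖A *ᵥ fun j => (v j : ℝ)‖) : c ≤ lambdaOne d A :=
  le_csInf (lambdaOne_set_nonempty hd) (by rintro r ⟨v, hv, rfl⟩; exact h v hv)

lemma exists_norm_lt_of_lambdaOne_lt {c : ℝ} (hd : 0 < d) (h : lambdaOne d A < c) :
    ∃ v : Fin d → ℤ, v ≠ 0 ∧ ‖A *ᵥ fun j => (v j : ℝ)‖ < c := by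
  obtain ⟨r, ⟨v, hv, rfl⟩, hr⟩ := exists_lt_of_csInf_lt (lambdaOne_set_nonempty hd) h
  exact ⟨v, hv, hr⟩

end lambdaOne

section SingleMatrix

variable {m n : ℕ}

lemma norm_finAppend {E : Type*} [SeminormedAddGroup E] (x : Fin m → E) (y : Fin n → E) :
    ‖Fin.append x y‖ = max ‖x‖ ‖y‖ := by
  refine le_antisymm ((pi_norm_le_iff_of_nonneg (by positivity)).2 fun k => ?_) (max_le ?_ ?_)
  · refine Fin.addCases (fun i => ?_) (fun j => ?_) k
    · simpa using (norm_le_pi_norm x i).trans (le_max_left _ _)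
    · simpa using (norm_le_pi_norm y j).trans (le_max_right _ _)
  · exact (pi_norm_le_iff_of_nonneg (norm_nonneg _)).2 fun i => by
      simpa using norm_le_pi_norm (Fin.append x y) (Fin.castAdd n i)
  · exact (pi_norm_le_iff_of_nonneg (norm_nonneg _)).2 fun j => by
      simpa using norm_le_pi_norm (Fin.append x y) (Fin.natAdd m j)

lemma finAppend_eq_zero_iff {α : Type*} [Zero α] (x : Fin m → α) (y : Fin n → α) :
    Fin.append x y = 0 ↔ x = 0 ∧ y = 0 := by
  refine ⟨fun h => ⟨funext fun i => ?_, funext fun j => ?_⟩, fun ⟨hx, hy⟩ => ?_⟩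
  · simpa using congrFun h (Fin.castAdd n i)
  · simpa using congrFun h (Fin.natAdd m j)
  · ext k; refine Fin.addCases (fun i => ?_) (fun j => ?_) k <;> simp [hx, hy]

lemma exists_eq_finAppend_neg (v : Fin (m + n) → ℤ) :
    ∃ (p : Fin m → ℤ) (q : Fin n → ℤ), v = Fin.append (-p) q :=
  ⟨-fun i => v (Fin.castAdd n i), fun j => v (Fin.natAdd m j), by
    rw [neg_neg, Fin.append_castAdd_natAdd]⟩

lemma gMat_mulVec_append (t : ℝ) (x : Fin m → ℝ) (y : Fin n → ℝ) :
    gMat m n t *ᵥ Fin.append x y = Fin.append (exp (t / m) • x) (exp (-t / n) • y) := by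
  ext k
  simp only [Matrix.mulVec, dotProduct, gMat, Matrix.of_apply, ite_mul, zero_mul, Fin.val_inj]
  refine Fin.addCases (fun i => ?_) (fun j => ?_) k <;> simp

lemma uMat_mulVec_append (θ : Fin m → Fin n → ℝ) (x : Fin m → ℝ) (y : Fin n → ℝ) :
    uMat m n θ *ᵥ Fin.append x y = Fin.append (x + fun k => ∑ j, θ k j * y j) y := by
  ext k
  simp only [Matrix.mulVec, dotProduct, Fin.sum_univ_add, Fin.append_left, Fin.append_right]
  refine Fin.addCases (fun i => ?_) (fun j => ?_) k
  · simp [uMat, Fin.val_inj]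
  · rw [Finset.sum_eq_zero fun i _ => ?_, zero_add]
    · simp [uMat, Fin.val_inj]
    · have hji : m + (j : ℕ) ≠ i := by omega
      simp [uMat, hji]

lemma gMat_mul_uMat_mulVec_append (t : ℝ) (θ : Fin m → Fin n → ℝ) (x : Fin m → ℝ)
    (y : Fin n → ℝ) :
    (gMat m n t * uMat m n θ) *ᵥ Fin.append x y =
      Fin.append (exp (t / m) • (x + fun k => ∑ j, θ k j * y j)) (exp (-t / n) • y) := by
  rw [← mulVec_mulVec, uMat_mulVec_append, gMat_mulVec_append]

def linearFormError (θ : Fin m → Fin n → ℝ) (p : Fin m → ℤ) (q : Fin n → ℤ) : Fin m → ℝ :=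
  fun k => (∑ j, θ k j * (q j : ℝ)) - (p k : ℝ)

lemma norm_gMat_mul_uMat_mulVec (t : ℝ) (θ : Fin m → Fin n → ℝ) (p : Fin m → ℤ)
    (q : Fin n → ℤ) :
    ‖(gMat m n t * uMat m n θ) *ᵥ fun k => ((Fin.append (-p) q k : ℤ) : ℝ)‖ =
      max (exp (t / m) * ‖linearFormError θ p q‖) (exp (-t / n) * ‖fun j => (q j : ℝ)‖) := by
  have hcast : (fun k => ((Fin.append (-p) q k : ℤ) : ℝ)) =
      Fin.append (fun i => -(p i : ℝ)) (fun j => (q j : ℝ)) := by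
    ext k; refine Fin.addCases (fun i => ?_) (fun j => ?_) k <;> simp
  have herr :
      ((fun i => -(p i : ℝ)) + fun k => ∑ j, θ k j * (q j : ℝ)) = linearFormError θ p q := by
    ext k; simp only [Pi.add_apply, linearFormError]; ring
  rw [hcast, gMat_mul_uMat_mulVec_append, norm_finAppend, herr, norm_smul, norm_smul,
    norm_of_nonneg (exp_pos _).le, norm_of_nonneg (exp_pos _).le]

lemma exp_le_norm_gMat_mul_uMat_mulVec (t : ℝ) (θ : Fin m → Fin n → ℝ) {p : Fin m → ℤ}
    (hp : p ≠ 0) :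
    exp (t / m) ≤ ‖(gMat m n t * uMat m n θ) *ᵥ fun k => ((Fin.append (-p) 0 k : ℤ) : ℝ)‖ := by
  have herr : ‖linearFormError θ p 0‖ = ‖fun j => (p j : ℝ)‖ := by
    rw [← norm_neg]; congr 1; ext k; simp [linearFormError]
  rw [norm_gMat_mul_uMat_mulVec, herr]
  exact le_max_of_le_left (le_mul_of_one_le_right (exp_pos _).le (one_le_norm_intCast hp))

lemma lambdaOne_pos (hm : 0 < m) (t : ℝ) (θ : Fin m → Fin n → ℝ) :
    0 < lambdaOne (m + n) (gMat m n t * uMat m n θ) := by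
  refine lt_of_lt_of_le (lt_min (exp_pos (t / m)) (exp_pos (-t / n))) (le_lambdaOne (by omega) ?_)
  intro v hv
  obtain ⟨p, q, rfl⟩ := exists_eq_finAppend_neg v
  by_cases hq : q = 0
  · subst hq
    have hp : p ≠ 0 := by simpa [finAppend_eq_zero_iff] using hv
    exact min_le_of_left_le (exp_le_norm_gMat_mul_uMat_mulVec t θ hp)
  · rw [norm_gMat_mul_uMat_mulVec]
    exact min_le_of_right_le
      (le_max_of_le_right (le_mul_of_one_le_right (exp_pos _).le (one_le_norm_intCast hq)))

lemma QSet_mono {θ : Fin m → Fin n → ℝ} {ε ε' : ℝ} (hε : ε ≤ ε') :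
    QSet m n θ ε ⊆ QSet m n θ ε' :=
  fun _ ⟨hQ, p, q, herr, hq0, hqQ⟩ =>
    ⟨hQ, p, q, herr.trans_le (mul_le_mul_of_nonneg_right hε (by positivity)), hq0, hqQ⟩

lemma hOne_le_of_exp_sub_mem_QSet (hm : 0 < m) (hn : 0 < n) {θ : Fin m → Fin n → ℝ}
    {τ c δ : ℝ} (hδ : 0 < δ) (hc : exp (-c) ≤ δ ^ n)
    (h : exp (τ - c) ∈ QSet m n θ (δ ^ m * exp (-c))) :
    hOne m n θ τ ≤ log δ := by
  obtain ⟨-, p, q, herr, hq0, hqQ⟩ := h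
  have hq : q ≠ 0 := by rintro rfl; simp [← Pi.zero_def, hn.ne'] at hq0
  have hv : Fin.append (-p) q ≠ 0 := by simp [finAppend_eq_zero_iff, hq]
  refine log_le_log (lambdaOne_pos hm τ θ) ((lambdaOne_le_norm _ hv).trans ?_)
  rw [norm_gMat_mul_uMat_mulVec]
  refine max_le ?_ ?_
  · rw [← pow_le_pow_iff_left₀ (by positivity) hδ.le hm.ne', exp_div_mul_pow hm.ne']
    calc exp τ * ‖linearFormError θ p q‖ ^ m
        ≤ exp τ * (δ ^ m * exp (-c) * (exp (τ - c))⁻¹) :=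
          mul_le_mul_of_nonneg_left herr.le (exp_pos _).le
      _ = δ ^ m * exp (τ + -c + -(τ - c)) := by rw [exp_add, exp_add, exp_neg (τ - c)]; ring
      _ = δ ^ m := by rw [show τ + -c + -(τ - c) = 0 by ring, exp_zero, mul_one]
  · rw [← pow_le_pow_iff_left₀ (by positivity) hδ.le hn.ne', exp_div_mul_pow hn.ne']
    calc exp (-τ) * ‖fun j => (q j : ℝ)‖ ^ n ≤ exp (-τ) * exp (τ - c) :=
          mul_le_mul_of_nonneg_left hqQ (exp_pos _).le
      _ = exp (-c) := by rw [← exp_add]; ring_nf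
      _ ≤ δ ^ n := hc

lemma exp_mem_QSet_of_hOne_lt (hm : 0 < m) (hn : 0 < n) {θ : Fin m → Fin n → ℝ} {τ δ : ℝ}
    (hτ : 0 ≤ τ) (hδ : 0 < δ) (hδ1 : δ ≤ 1) (h : hOne m n θ τ < log δ) :
    exp τ ∈ QSet m n θ (δ ^ m) := by
  have hlt := (log_lt_log_iff (lambdaOne_pos hm τ θ) hδ).1 h
  obtain ⟨v, hv, hvδ⟩ := exists_norm_lt_of_lambdaOne_lt (by omega) hlt
  obtain ⟨p, q, rfl⟩ := exists_eq_finAppend_neg v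
  have hq : q ≠ 0 := by
    rintro rfl
    have hp : p ≠ 0 := by simpa [finAppend_eq_zero_iff] using hv
    exact (exp_le_norm_gMat_mul_uMat_mulVec τ θ hp).not_gt
      (hvδ.trans_le (hδ1.trans (one_le_exp (by positivity))))
  rw [norm_gMat_mul_uMat_mulVec, max_lt_iff] at hvδ
  obtain ⟨herr, hqδ⟩ := hvδ
  refine ⟨one_le_exp hτ, p, q, ?_, pow_pos (one_pos.trans_le (one_le_norm_intCast hq)) n, ?_⟩
  · have := pow_lt_pow_left₀ herr (by positivity) hm.ne'
    rw [exp_div_mul_pow hm.ne'] at this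
    rw [lt_mul_inv_iff₀ (exp_pos _), mul_comm]
    exact this
  · have := (pow_lt_pow_left₀ hqδ (by positivity) hn.ne').trans_le (pow_le_one₀ hδ.le hδ1)
    rw [exp_div_mul_pow hn.ne', exp_neg, inv_mul_lt_iff₀ (exp_pos _), mul_one] at this
    exact this.le

end SingleMatrix

section Family

variable {ι : Type*} {m n : ι → ℕ} {a : ι → ℝ} {θ : ∀ i, Fin (m i) → Fin (n i) → ℝ}

lemma eventually_exists_hOne_lt [Finite ι] (hm : ∀ i, 0 < m i) (hn : ∀ i, 0 < n i)
    (ha : ∀ i, 0 < a i)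
    (h : ∀ ε > 0, ∀ᶠ t in atTop, ∃ i, exp (a i * t) ∈ QSet (m i) (n i) (θ i) ε) (M : ℝ) :
    ∀ᶠ t in atTop, ∃ i, hOne (m i) (n i) (θ i) (a i * t) < M := by
  set δ := exp (M - 1)
  -- Shifting time by `σ` turns `‖q‖^n ≤ Q` into `‖q‖^n ≤ e^{-a_i σ} e^{a_i t}`; `ε` pays for it.
  obtain ⟨σ, hσ⟩ : ∃ σ, ∀ i, exp (-(a i * σ)) ≤ δ ^ n i :=
    (eventually_all.2 fun i => (tendsto_exp_neg_atTop_nhds_zero.comp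
      (tendsto_id.const_mul_atTop (ha i))).eventually (eventually_le_nhds (by positivity))).exists
  obtain ⟨ε, hεle, hε⟩ : ∃ ε, (∀ i, ε ≤ δ ^ m i * exp (-(a i * σ))) ∧ 0 < ε :=
    ((eventually_all.2 fun i => nhdsWithin_le_nhds (eventually_le_nhds (by positivity))).and
      (self_mem_nhdsWithin (s := Set.Ioi (0 : ℝ)))).exists
  filter_upwards [(tendsto_atTop_add_const_right atTop (-σ) tendsto_id).eventually (h ε hε)]
    with t ⟨i, hi⟩
  refine ⟨i, (hOne_le_of_exp_sub_mem_QSet (hm i) (hn i) (exp_pos _) (hσ i) ?_).trans_lt ?_⟩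
  · rw [← sub_eq_add_neg, mul_sub] at hi
    exact QSet_mono (hεle i) hi
  · rw [log_exp]; linarith

lemma eventually_exists_exp_mem_QSet (hm : ∀ i, 0 < m i) (hn : ∀ i, 0 < n i)
    (ha : ∀ i, 0 < a i) (h : ∀ M : ℝ, ∀ᶠ t in atTop, ∃ i, hOne (m i) (n i) (θ i) (a i * t) < M)
    {ε : ℝ} (hε : 0 < ε) :
    ∀ᶠ t in atTop, ∃ i, exp (a i * t) ∈ QSet (m i) (n i) (θ i) ε := by
  set δ := min ε 1
  have hδ : 0 < δ := lt_min hε one_pos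
  filter_upwards [h (log δ), eventually_ge_atTop 0] with t ⟨i, hi⟩ ht
  refine ⟨i, QSet_mono ?_ (exp_mem_QSet_of_hOne_lt (hm i) (hn i) (mul_nonneg (ha i).le ht) hδ
    (min_le_right _ _) hi)⟩
  exact (pow_le_of_le_one hδ.le (min_le_right _ _) (hm i).ne').trans (min_le_left _ _)

end Family

section Joint

variable {s : ℕ} {m n : Fin s → ℕ} {a : Fin s → ℝ} {θ : ∀ i, Fin (m i) → Fin (n i) → ℝ}

lemma exp_mem_QSetW_iff (ha : ∀ i, a i ≠ 0) {ε t : ℝ} :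
    exp t ∈ QSetW m n a θ ε ↔ ∃ i, exp (a i * t) ∈ QSet (m i) (n i) (θ i) ε := by
  simp only [QSetW, Set.mem_iUnion, Set.mem_image]
  refine exists_congr fun i => ⟨fun ⟨Q, hQ, hQt⟩ => ?_, fun h => ⟨_, h, ?_⟩⟩
  · rw [one_div, rpow_inv_eq (zero_le_one.trans hQ.1) (exp_pos t).le (ha i), ← exp_mul,
      mul_comm] at hQt
    rwa [← hQt]
  · rw [one_div, rpow_inv_eq (exp_pos _).le (exp_pos t).le (ha i), ← exp_mul, mul_comm]

lemma jointlySingular_iff (ha : ∀ i, a i ≠ 0) :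
    JointlySingular m n a θ ↔
      ∀ ε > 0, ∀ᶠ t in atTop, ∃ i, exp (a i * t) ∈ QSet (m i) (n i) (θ i) ε := by
  refine forall₂_congr fun ε _ => ?_
  have hS : (∃ C, Set.Ioi C ⊆ QSetW m n a θ ε) ↔ QSetW m n a θ ε ∈ atTop := by
    simp only [atTop_basis_Ioi.mem_iff, true_and]
  rw [hS]
  conv_lhs => rw [← map_exp_atTop]
  exact eventually_map.trans (eventually_congr (.of_forall fun t => exp_mem_QSetW_iff ha))

end Joint

end DaniCorrespondence

open DaniCorrespondence

/-- `Θ` is jointly `a`-singular if and only if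
`limsup_{t→∞} min_{1≤i≤s} h_{θ_i,1}(a_i t) = −∞` (as an extended real limsup). -/
theorem stmt14 (s : ℕ) (hs : 2 ≤ s) (m n : Fin s → ℕ) (hm : ∀ i, 0 < m i) (hn : ∀ i, 0 < n i)
    (a : Fin s → ℝ) (ha : ∀ i, 0 < a i)
    (θ : ∀ i, Fin (m i) → Fin (n i) → ℝ) :
    JointlySingular m n a θ ↔
      Filter.limsup
        (fun t : ℝ => ((⨅ i, hOne (m i) (n i) (θ i) (a i * t) : ℝ) : EReal)) Filter.atTop = ⊥ := by
  have : Nonempty (Fin s) := ⟨⟨0, by omega⟩⟩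
  simp_rw [jointlySingular_iff fun i => (ha i).ne', limsup_coe_eq_bot_iff,
    ciInf_lt_iff (Set.finite_range _).bddBelow]
  exact ⟨fun h => eventually_exists_hOne_lt hm hn ha h,
    fun h ε hε => eventually_exists_exp_mem_QSet hm hn ha h hε⟩
end
end
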